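/- arXiv:1511.06322 — 5 statements merged into one kernel-verified Lean document; each statement's English description precedes it below -/
import Mathlib

section
/- Let G be a finite subgroup of GL(n, ℚ), acting on the polynomial ring ℚ[v₁, …, v_n] by (g · p)(u) = p(g⁻¹u). If g ∈ GL(n, ℚ) satisfies g · p = p for every G-invariant polynomial p ∈ ℚ[v₁, …, v_n]^G, then g ∈ G. -/
/-!
If `g ∉ G`, choose `v ∈ ℚⁿ` moved by every element of the coset `gG`; this is possible because
`ℚⁿ` is not a finite union of proper subspaces. The orbit product `p = ∏_{h ∈ G} h · ‖u - v‖²`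
is `G`-invariant and vanishes at `v`, whereas `(g · p)(v) = ∏_{h ∈ G} ‖(gh)⁻¹ v - v‖² ≠ 0`.
-/

open MvPolynomial

/-- Substitution of a matrix `g` into a multivariate polynomial: `(q ∘ g)(v) = q(g·v)`. -/
noncomputable def polyComp {R : Type*} [CommSemiring R] {n : ℕ}
    (q : MvPolynomial (Fin n) R) (g : Matrix (Fin n) (Fin n) R) : MvPolynomial (Fin n) R :=
  bind₁ (fun i => ∑ j, C (g i j) * X j) q

/-- The action of `GL(n, ℚ)` on `ℚ[v₁, …, v_n]` given by `(g · p)(u) = p(g⁻¹·u)`. -/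
noncomputable def glAct {n : ℕ} (g : GL (Fin n) ℚ) (p : MvPolynomial (Fin n) ℚ) :
    MvPolynomial (Fin n) ℚ :=
  polyComp p ((g⁻¹ : GL (Fin n) ℚ) : Matrix (Fin n) (Fin n) ℚ)

open scoped Matrix

theorem Module.End.exists_forall_apply_ne_self {k E ι : Type*} [DivisionRing k] [Infinite k]
    [AddCommGroup E] [Module k E] [Finite ι] (f : ι → Module.End k E) (hf : ∀ i, f i ≠ 1) :
    ∃ v, ∀ i, f i v ≠ v := by
  by_contra! hfix
  have hcover : ⋃ i, (LinearMap.ker (f i - 1) : Set E) = Set.univ :=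
    Set.eq_univ_of_forall fun v ↦ by
      obtain ⟨i, hi⟩ := hfix v
      exact Set.mem_iUnion.mpr ⟨i, by simp [hi]⟩
  obtain ⟨i, hi⟩ := Subspace.exists_eq_top_of_iUnion_eq_univ hcover
  exact hf i (sub_eq_zero.mp (LinearMap.ker_eq_top.mp hi))

theorem Matrix.GeneralLinearGroup.exists_forall_mulVec_ne_self {k m ι : Type*} [Field k]
    [Infinite k] [Fintype m] [DecidableEq m] [Finite ι] (A : ι → GL m k) (hA : ∀ i, A i ≠ 1) :
    ∃ v : m → k, ∀ i, (A i : Matrix m m k) *ᵥ v ≠ v := by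
  refine Module.End.exists_forall_apply_ne_self (fun i ↦ Matrix.toLin' (A i : Matrix m m k))
    fun i h ↦ hA i (Units.ext ?_)
  rwa [Units.val_one, ← Matrix.toLin'.injective.eq_iff, Matrix.toLin'_one]

section Action

variable {n : ℕ}

theorem eval_glAct (g : GL (Fin n) ℚ) (p : MvPolynomial (Fin n) ℚ) (x : Fin n → ℚ) :
    eval x (glAct g p) = eval (((g⁻¹ : GL (Fin n) ℚ) : Matrix (Fin n) (Fin n) ℚ) *ᵥ x) p := by
  change eval₂Hom (RingHom.id ℚ) x (bind₁ _ p) = _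
  rw [eval₂Hom_bind₁]
  congr 2
  funext i
  simp [Matrix.mulVec, dotProduct]

theorem glAct_glAct (g h : GL (Fin n) ℚ) (p : MvPolynomial (Fin n) ℚ) :
    glAct g (glAct h p) = glAct (g * h) p :=
  MvPolynomial.funext fun x ↦ by
    simp only [eval_glAct, Matrix.mulVec_mulVec, mul_inv_rev, Units.val_mul]

theorem glAct_prod {ι : Type*} (s : Finset ι) (g : GL (Fin n) ℚ)
    (p : ι → MvPolynomial (Fin n) ℚ) : glAct g (∏ i ∈ s, p i) = ∏ i ∈ s, glAct g (p i) :=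
  map_prod (bind₁ _) p s

noncomputable def orbitProd (G : Subgroup (GL (Fin n) ℚ)) [Fintype G]
    (q : MvPolynomial (Fin n) ℚ) : MvPolynomial (Fin n) ℚ :=
  ∏ h : G, glAct h q

variable (G : Subgroup (GL (Fin n) ℚ)) [Fintype G]

theorem glAct_orbitProd {g : GL (Fin n) ℚ} (hg : g ∈ G) (q : MvPolynomial (Fin n) ℚ) :
    glAct g (orbitProd G q) = orbitProd G q := by
  simp only [orbitProd, glAct_prod, glAct_glAct]
  exact Fintype.prod_equiv (Equiv.mulLeft ⟨g, hg⟩) _ _ fun _ ↦ by simp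

theorem eval_orbitProd (q : MvPolynomial (Fin n) ℚ) (x : Fin n → ℚ) :
    eval x (orbitProd G q) =
      ∏ h : G, eval ((((h : GL (Fin n) ℚ)⁻¹ : GL (Fin n) ℚ) : Matrix (Fin n) (Fin n) ℚ) *ᵥ x) q := by
  simp only [orbitProd, map_prod, eval_glAct]

end Action

noncomputable def sqDistPoly {σ K : Type*} [Fintype σ] [CommRing K] (v : σ → K) :
    MvPolynomial σ K :=
  ∑ i, (X i - C (v i)) ^ 2

theorem eval_sqDistPoly_eq_zero_iff {σ K : Type*} [Fintype σ] [CommRing K] [LinearOrder K]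
    [IsStrictOrderedRing K] (v x : σ → K) : eval x (sqDistPoly v) = 0 ↔ x = v := by
  simp only [sqDistPoly, map_sum, map_pow, map_sub, eval_X, eval_C,
    Finset.sum_eq_zero_iff_of_nonneg (fun i _ ↦ sq_nonneg (x i - v i)), Finset.mem_univ,
    forall_const, pow_eq_zero_iff two_ne_zero, sub_eq_zero, funext_iff]

/-- Let `G` be a finite subgroup of `GL(n, ℚ)`, acting on `ℚ[v₁, …, v_n]` by
`(g · p)(u) = p(g⁻¹u)`. If `g ∈ GL(n, ℚ)` satisfies `g · p = p` for every `G`-invariant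
polynomial `p ∈ ℚ[v₁, …, v_n]^G`, then `g ∈ G`. -/
theorem stmt_2 {n : ℕ} (G : Subgroup (GL (Fin n) ℚ)) (hG : Finite G)
    (g : GL (Fin n) ℚ)
    (hg : ∀ p : MvPolynomial (Fin n) ℚ, (∀ h ∈ G, glAct h p = p) → glAct g p = p) :
    g ∈ G := by
  by_contra hgG
  have := Fintype.ofFinite G
  obtain ⟨v, hv⟩ := Matrix.GeneralLinearGroup.exists_forall_mulVec_ne_self
    (fun h : G ↦ (g * (h : GL (Fin n) ℚ))⁻¹) fun h hgh ↦ by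
      rw [inv_eq_one, mul_eq_one_iff_eq_inv] at hgh
      exact hgG (hgh ▸ G.inv_mem h.2)
  set p := orbitProd G (sqDistPoly v)
  have hp_v : eval v p = 0 :=
    (eval_orbitProd G _ v).trans <| Finset.prod_eq_zero (Finset.mem_univ 1) <| by
      simp [eval_sqDistPoly_eq_zero_iff]
  have hp_gv : eval v (glAct g p) ≠ 0 := by
    rw [eval_glAct, eval_orbitProd]
    refine Finset.prod_ne_zero_iff.mpr fun h _ ↦ ?_
    rw [Matrix.mulVec_mulVec, ← Units.val_mul, ← mul_inv_rev, Ne,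
      eval_sqDistPoly_eq_zero_iff]
    exact hv h
  rw [hg p fun h hh ↦ glAct_orbitProd G hh _] at hp_gv
  exact hp_gv hp_v
end

section
/- Let G be a finite subgroup of GL(n, ℚ), and let p₁, …, p_r ∈ ℚ[v₁, …, v_n] be homogeneous polynomials that generate the invariant ring ℚ[v₁, …, v_n]^G as a ℚ-algebra. Then G = O(p₁, …, p_r) = {g ∈ GL(n, ℚ) : p_i ∘ g = p_i for all i = 1, …, r}. -/
/-!
If `g` fixes the generators `pᵢ`, it fixes every `G`-invariant polynomial. Were `g ∉ G`, choose
`v` with `g v ≠ h v` for all `h ∈ G` (a vector space over an infinite field is not a finite union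
of proper subspaces). Then the orbits `G v` and `G (g v)` are disjoint, so some `f` vanishes on the
first and equals `1` on the second, and the norm `∏_{h ∈ G} f ∘ h` is an invariant taking the
values `0` at `v` and `1` at `g v`; but an invariant fixed by `g` takes the same value at both.
-/

open MvPolynomial

open Matrix

section polyComp

variable {R : Type*} [CommSemiring R] {n : ℕ}

lemma eval_polyComp (q : MvPolynomial (Fin n) R) (g : Matrix (Fin n) (Fin n) R)
    (v : Fin n → R) : eval v (polyComp q g) = eval (g *ᵥ v) q := by
  rw [polyComp, eval, eval₂Hom_bind₁]
  congr 1
  ext i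
  · simp
  · simp [mulVec, dotProduct]

lemma polyComp_polyComp (q : MvPolynomial (Fin n) R) (g h : Matrix (Fin n) (Fin n) R) :
    polyComp (polyComp q h) g = polyComp q (h * g) := by
  simp only [polyComp, bind₁_bind₁]
  congr 2
  funext i
  simp only [map_sum, map_mul, bind₁_C_right, bind₁_X_right, Finset.mul_sum, mul_apply,
    ← mul_assoc, Finset.sum_mul]
  exact Finset.sum_comm

lemma polyComp_prod {ι : Type*} (s : Finset ι) (q : ι → MvPolynomial (Fin n) R)
    (g : Matrix (Fin n) (Fin n) R) : polyComp (∏ i ∈ s, q i) g = ∏ i ∈ s, polyComp (q i) g :=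
  map_prod _ _ _

lemma polyComp_eq_self_of_mem_adjoin {S : Set (MvPolynomial (Fin n) R)}
    {g : Matrix (Fin n) (Fin n) R} (hS : ∀ s ∈ S, polyComp s g = s)
    {q : MvPolynomial (Fin n) R} (hq : q ∈ Algebra.adjoin R S) : polyComp q g = q :=
  Algebra.adjoin_le (S := AlgHom.equalizer (bind₁ _) (AlgHom.id R _)) hS hq

end polyComp

section separation

variable {K : Type*} [Field K] {n : ℕ}

lemma exists_eval_eq_one_eval_eq_zero (A : Finset (Fin n → K)) (s : Fin n → K) :
    ∃ χ : MvPolynomial (Fin n) K, eval s χ = 1 ∧ ∀ a ∈ A, a ≠ s → eval a χ = 0 := by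
  classical
  have hcoord : ∀ a : A.erase s, ∃ j, (a : Fin n → K) j ≠ s j := fun a =>
    Function.ne_iff.mp (Finset.ne_of_mem_erase a.2)
  choose j hj using hcoord
  refine ⟨∏ a : A.erase s, C ((s (j a) - (a : Fin n → K) (j a))⁻¹) *
      (X (j a) - C ((a : Fin n → K) (j a))), ?_, fun a ha has => ?_⟩
  · rw [map_prod]
    exact Finset.prod_eq_one fun a _ => by
      simp [inv_mul_cancel₀ (sub_ne_zero.mpr (hj a).symm)]
  · rw [map_prod]
    exact Finset.prod_eq_zero (Finset.mem_univ ⟨a, Finset.mem_erase.mpr ⟨has, ha⟩⟩) (by simp)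

lemma exists_eval_eq_zero_on_eval_eq_one_on {S T : Finset (Fin n → K)} (hST : Disjoint S T) :
    ∃ f : MvPolynomial (Fin n) K, (∀ s ∈ S, eval s f = 0) ∧ ∀ t ∈ T, eval t f = 1 := by
  classical
  choose χ hχ₁ hχ₀ using exists_eval_eq_one_eval_eq_zero (S ∪ T)
  refine ⟨∑ t ∈ T, χ t, fun s hs => ?_, fun t ht => ?_⟩
  · rw [map_sum]
    exact Finset.sum_eq_zero fun t ht =>
      hχ₀ t s (Finset.mem_union_left T hs) (Finset.disjoint_left.mp hST hs <| · ▸ ht)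
  · rw [map_sum, Finset.sum_eq_single_of_mem t ht fun u hu hut =>
      hχ₀ u t (Finset.mem_union_right S ht) (Ne.symm hut)]
    exact hχ₁ t

lemma exists_mulVec_ne_mulVec [Infinite K] {ι : Type*} [Finite ι]
    (A : ι → Matrix (Fin n) (Fin n) K) (B : Matrix (Fin n) (Fin n) K) (hAB : ∀ i, A i ≠ B) :
    ∃ v, ∀ i, A i *ᵥ v ≠ B *ᵥ v := by
  have hker : ∀ i, LinearMap.ker (toLin' (A i - B)) ≠ ⊤ := fun i h =>
    hAB i <| sub_eq_zero.mp <| toLin'.map_eq_zero_iff.mp <| LinearMap.ker_eq_top.mp h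
  obtain ⟨v, hv⟩ := Submodule.exists_forall_notMem_of_forall_ne_top _ hker
  exact ⟨v, fun i h => hv i (by simp [h])⟩

end separation

section invariants

variable {K : Type*} [Field K] {n : ℕ} {G : Subgroup (GL (Fin n) K)}

lemma polyComp_prod_polyComp_of_mem [Fintype G] (f : MvPolynomial (Fin n) K)
    {k : GL (Fin n) K} (hk : k ∈ G) :
    polyComp (∏ h : G, polyComp f (h.1 : Matrix (Fin n) (Fin n) K)) k =
      ∏ h : G, polyComp f (h.1 : Matrix (Fin n) (Fin n) K) := by
  simp only [polyComp_prod, polyComp_polyComp]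
  conv_rhs => rw [← Equiv.prod_comp (Equiv.mulRight (⟨k, hk⟩ : G))]
  simp only [Equiv.coe_mulRight, Subgroup.coe_mul, Units.val_mul]

lemma exists_invariant_eval_ne [Finite G] {v w : Fin n → K}
    (hvw : ∀ h ∈ G, (h.1 : Matrix (Fin n) (Fin n) K) *ᵥ v ≠ w) :
    ∃ q : MvPolynomial (Fin n) K, (∀ k ∈ G, polyComp q k = q) ∧ eval v q ≠ eval w q := by
  classical
  let _ := Fintype.ofFinite G
  let orbit (u : Fin n → K) :=
    Finset.univ.image fun h : G => (h.1 : Matrix (Fin n) (Fin n) K) *ᵥ u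
  have hmem (h : G) (u : Fin n → K) : (h.1 : Matrix (Fin n) (Fin n) K) *ᵥ u ∈ orbit u :=
    Finset.mem_image_of_mem _ (Finset.mem_univ h)
  have hdisj : Disjoint (orbit v) (orbit w) := by
    simp only [orbit, Finset.disjoint_left, Finset.mem_image, Finset.mem_univ, true_and]
    rintro _ ⟨h, rfl⟩ ⟨h', hh'⟩
    apply hvw _ (h'⁻¹ * h).2
    calc ((h'⁻¹ * h).1 : Matrix (Fin n) (Fin n) K) *ᵥ v
        = ((h'⁻¹ * h').1 : Matrix (Fin n) (Fin n) K) *ᵥ w := by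
          simp only [Subgroup.coe_mul, Units.val_mul, ← mulVec_mulVec, hh']
      _ = w := by simp
  obtain ⟨f, hf₀, hf₁⟩ := exists_eval_eq_zero_on_eval_eq_one_on hdisj
  refine ⟨∏ h : G, polyComp f h.1, fun k hk => polyComp_prod_polyComp_of_mem f hk, ?_⟩
  simp only [map_prod, eval_polyComp]
  rw [Finset.prod_eq_zero (Finset.mem_univ 1) (hf₀ _ (hmem 1 v)),
    Finset.prod_eq_one fun h _ => hf₁ _ (hmem h w)]
  exact zero_ne_one

end invariants

lemma forall_glAct_eq_iff {n : ℕ} {G : Subgroup (GL (Fin n) ℚ)} {q : MvPolynomial (Fin n) ℚ} :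
    (∀ h ∈ G, glAct h q = q) ↔ ∀ h ∈ G, polyComp q (h : Matrix (Fin n) (Fin n) ℚ) = q :=
  ⟨fun hq h hh => by simpa [glAct] using hq h⁻¹ (inv_mem hh),
    fun hq h hh => hq h⁻¹ (inv_mem hh)⟩

theorem stmt_3_general {n : ℕ} (G : Subgroup (GL (Fin n) ℚ)) (hG : Finite G)
    (r : ℕ) (p : Fin r → MvPolynomial (Fin n) ℚ)
    (hgen : (Algebra.adjoin ℚ (Set.range p) : Set (MvPolynomial (Fin n) ℚ)) =
      {q : MvPolynomial (Fin n) ℚ | ∀ h ∈ G, glAct h q = q}) :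
    (G : Set (GL (Fin n) ℚ)) =
      {g : GL (Fin n) ℚ |
        ∀ i, polyComp (p i) (g : Matrix (Fin n) (Fin n) ℚ) = p i} := by
  have hinv (q : MvPolynomial (Fin n) ℚ) :
      q ∈ Algebra.adjoin ℚ (Set.range p) ↔
        ∀ h ∈ G, polyComp q (h : Matrix (Fin n) (Fin n) ℚ) = q := by
    rw [← SetLike.mem_coe, hgen, Set.mem_ofPred_eq, forall_glAct_eq_iff]
  ext g
  refine ⟨fun hg i => (hinv (p i)).mp (Algebra.subset_adjoin ⟨i, rfl⟩) g hg, fun hg => ?_⟩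
  by_contra hgG
  obtain ⟨v, hv⟩ := exists_mulVec_ne_mulVec (fun h : G => (h.1 : Matrix (Fin n) (Fin n) ℚ))
    (g : Matrix (Fin n) (Fin n) ℚ) fun h hhg => hgG ((Units.ext hhg : h.1 = g) ▸ h.2)
  obtain ⟨q, hq, hqv⟩ := exists_invariant_eval_ne (v := v) fun h hh => hv ⟨h, hh⟩
  have hgq : polyComp q g = q :=
    polyComp_eq_self_of_mem_adjoin (by rintro _ ⟨i, rfl⟩; exact hg i) ((hinv q).mpr hq)
  exact hqv (by rw [← eval_polyComp, hgq])

/-- Let `G` be a finite subgroup of `GL(n, ℚ)` and let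
`p₁, …, p_r ∈ ℚ[v₁, …, v_n]` be homogeneous polynomials generating the invariant ring
`ℚ[v₁, …, v_n]^G` as a `ℚ`-algebra. Then
`G = O(p₁, …, p_r) = {g ∈ GL(n, ℚ) : p_i ∘ g = p_i for all i = 1, …, r}`. -/
theorem stmt_3 {n : ℕ} (G : Subgroup (GL (Fin n) ℚ)) (hG : Finite G)
    (r : ℕ) (p : Fin r → MvPolynomial (Fin n) ℚ)
    (hhom : ∀ i, ∃ d : ℕ, (p i).IsHomogeneous d)
    (hgen : (Algebra.adjoin ℚ (Set.range p) : Set (MvPolynomial (Fin n) ℚ)) =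
      {q : MvPolynomial (Fin n) ℚ | ∀ h ∈ G, glAct h q = q}) :
    (G : Set (GL (Fin n) ℚ)) =
      {g : GL (Fin n) ℚ |
        ∀ i, polyComp (p i) (g : Matrix (Fin n) (Fin n) ℚ) = p i} :=
  stmt_3_general G hG r p hgen
end

section
/- Let e₁, …, e_n ∈ ℚ[x₁, …, x_n] be the elementary symmetric polynomials. Then a matrix g ∈ GL(n, ℚ) satisfies e_i ∘ g = e_i for all i = 1, …, n if and only if g is a permutation matrix. In other words, the orthogonal group O(e₁, …, e_n) ≤ GL(n, ℚ) is exactly the symmetric group Σ_n acting by permutation of coordinates. -/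
/-!
Evaluating `e_i ∘ g = e_i` at a point `x` shows that the coordinates of `g x` and of `x` have the
same elementary symmetric functions, hence, by Vieta, form the same multiset. For `x` a standard
basis vector this makes every column of `g` a standard basis vector, and invertibility of `g` makes
the columns distinct, so `g` is a permutation matrix. Conversely a permutation matrix only renames
the variables, and the `e_i` are symmetric.
-/

open MvPolynomial

/-- A permutation matrix: the matrix of the linear map sending the standard basis vector
`m_j` to `m_{σ(j)}` for some permutation `σ`. -/
def IsPermMatrix {n : ℕ} (g : Matrix (Fin n) (Fin n) ℚ) : Prop :=
  ∃ σ : Equiv.Perm (Fin n), ∀ i j, g i j = if i = σ j then 1 else 0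

open Matrix

/- Vieta: both multisets are the roots of the same monic polynomial. -/
theorem Multiset.eq_of_esymm_eq {R : Type*} [CommRing R] [IsDomain R] {s t : Multiset R}
    (hcard : card s = card t) (h : ∀ i ≤ card s, s.esymm i = t.esymm i) : s = t := by
  have hprod : (s.map fun r => Polynomial.X - Polynomial.C r).prod
      = (t.map fun r => Polynomial.X - Polynomial.C r).prod := by
    rw [prod_X_sub_X_eq_sum_esymm, prod_X_sub_X_eq_sum_esymm, ← hcard]
    refine Finset.sum_congr rfl fun i hi => ?_
    rw [h i (Nat.lt_succ_iff.mp (Finset.mem_range.mp hi))]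
  simpa only [Polynomial.roots_multiset_prod_X_sub_C] using congrArg Polynomial.roots hprod

theorem Multiset.exists_eq_single_of_map_univ_eq {ι R : Type*} [Fintype ι] [DecidableEq ι]
    [Zero R] [One R] [NeZero (1 : R)] {v : ι → R} {j : ι}
    (h : Finset.univ.val.map v = Finset.univ.val.map (Pi.single j 1)) :
    ∃ k, v = Pi.single k 1 := by
  have hsplit : ∀ (w : ι → R) k,
      Finset.univ.val.map w = w k ::ₘ (Finset.univ.val.erase k).map w :=
    fun w k => by rw [← map_cons, cons_erase (Finset.mem_univ_val k)]
  obtain ⟨k, -, hk⟩ : ∃ k ∈ Finset.univ.val, v k = 1 :=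
    mem_map.mp (h ▸ mem_map.mpr ⟨j, Finset.mem_univ_val j, Pi.single_eq_same j 1⟩)
  have htail :
      (Finset.univ.val.erase k).map v = (Finset.univ.val.erase j).map (Pi.single j 1) := by
    rw [hsplit v k, hsplit _ j, hk, Pi.single_eq_same] at h
    exact (cons_inj_right 1).mp h
  refine ⟨k, funext fun i => ?_⟩
  rcases eq_or_ne i k with rfl | hik
  · simp [hk]
  · obtain ⟨i', hi', hvi⟩ := mem_map.mp <|
      htail ▸ mem_map_of_mem v ((mem_erase_of_ne hik).mpr (Finset.mem_univ_val i))
    rw [Pi.single_eq_of_ne hik, ← hvi, Pi.single_eq_of_ne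
      ((Nodup.mem_erase_iff Finset.univ.nodup).mp hi').1]

theorem aeval_polyComp {R : Type*} [CommSemiring R] {n : ℕ} (q : MvPolynomial (Fin n) R)
    (g : Matrix (Fin n) (Fin n) R) (x : Fin n → R) :
    aeval x (polyComp q g) = aeval (g *ᵥ x) q := by
  rw [polyComp, aeval_bind₁]
  congr 2 with i
  simp [mulVec, dotProduct]

theorem polyComp_eq_rename {R : Type*} [CommSemiring R] {n : ℕ} {g : Matrix (Fin n) (Fin n) R}
    (σ : Equiv.Perm (Fin n)) (hσ : ∀ i j, g i j = if i = σ j then 1 else 0)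
    (q : MvPolynomial (Fin n) R) : polyComp q g = rename σ.symm q := by
  have hrow : (fun i => ∑ j, C (g i j) * X j) = X ∘ σ.symm := by
    funext i
    simp [hσ, ← Equiv.symm_apply_eq]
  rw [polyComp, hrow, ← bind₁_rename, bind₁_X_left, AlgHom.id_apply]

theorem map_univ_mulVec_eq_of_polyComp_esymm {R : Type*} [CommRing R] [IsDomain R] {n : ℕ}
    {g : Matrix (Fin n) (Fin n) R}
    (h : ∀ i, 1 ≤ i → i ≤ n → polyComp (esymm (Fin n) R i) g = esymm (Fin n) R i)
    (x : Fin n → R) : Finset.univ.val.map (g *ᵥ x) = Finset.univ.val.map x := by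
  refine Multiset.eq_of_esymm_eq (by simp) fun i hi => ?_
  have hi' : polyComp (esymm (Fin n) R i) g = esymm (Fin n) R i := by
    rcases Nat.eq_zero_or_pos i with rfl | hpos
    · rw [esymm_zero, polyComp, map_one]
    · exact h i hpos (by simpa using hi)
  simpa only [aeval_polyComp, aeval_esymm_eq_multiset_esymm] using congrArg (aeval x) hi'

theorem isPermMatrix_of_mulVec_single {n : ℕ} (g : GL (Fin n) ℚ)
    (h : ∀ j, ∃ k, (g : Matrix (Fin n) (Fin n) ℚ) *ᵥ Pi.single j 1 = Pi.single k 1) :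
    IsPermMatrix (g : Matrix (Fin n) (Fin n) ℚ) := by
  choose σ hσ using h
  have hinj : σ.Injective := fun j j' hjj' => by
    have hcols : (g : Matrix (Fin n) (Fin n) ℚ) *ᵥ Pi.single j 1 = g *ᵥ Pi.single j' 1 := by
      rw [hσ, hσ, hjj']
    simpa [Pi.single_apply] using congrFun (mulVec_injective_of_isUnit g.isUnit hcols) j
  refine ⟨Equiv.ofBijective σ hinj.bijective_of_finite, fun i j => ?_⟩
  have hcol := congrFun (hσ j) i
  rw [mulVec_single_one, col_apply] at hcol
  rw [hcol, Pi.single_apply, Equiv.ofBijective_apply]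

/-- Let `e₁, …, e_n ∈ ℚ[x₁, …, x_n]` be the elementary symmetric polynomials.
A matrix `g ∈ GL(n, ℚ)` satisfies `e_i ∘ g = e_i` for all `i = 1, …, n` if and only if
`g` is a permutation matrix; i.e. `O(e₁, …, e_n)` is exactly the symmetric group `Σ_n`
acting by permutation of coordinates. -/
theorem stmt_5 {n : ℕ} (g : GL (Fin n) ℚ) :
    (∀ i, 1 ≤ i → i ≤ n →
        polyComp (esymm (Fin n) ℚ i) (g : Matrix (Fin n) (Fin n) ℚ) = esymm (Fin n) ℚ i) ↔
      IsPermMatrix (g : Matrix (Fin n) (Fin n) ℚ) := by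
  constructor
  · intro h
    refine isPermMatrix_of_mulVec_single g fun j => ?_
    exact Multiset.exists_eq_single_of_map_univ_eq (map_univ_mulVec_eq_of_polyComp_esymm h _)
  · rintro ⟨σ, hσ⟩ i - -
    rw [polyComp_eq_rename σ hσ, rename_esymm]
end

section
/- Let Q = {q₀, …, q_{r+1}} ⊂ ℚ[v₁, …, v_n] be a realizable family of n-algebraic forms with d = deg(q₀) > 1. If the complex orthogonal group O_ℂ(Q) = {f ∈ GL(n, ℂ) : q_i ∘ f = q_i for all i} is infinite, then d = 2. -/
/-!
Let `g` fix `q = ∑ μᵢ xᵢ ^ d` with `d ≥ 3` and write `Lᵢ = ∑ⱼ gᵢⱼ xⱼ`. The Hessian of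
`q ∘ g = ∑ μᵢ Lᵢ ^ d` is `gᵀ · diag(d(d-1) μᵢ Lᵢ ^ (d-2)) · g`, so comparing Hessian determinants
gives `det(g)² ∏ Lᵢ ^ (d-2) = ∏ xᵢ ^ (d-2)`. Each prime `xₘ` divides the left side, hence some
`Lᵢ`; so `g` is a monomial matrix, and evaluating `q ∘ g = q` at the basis vectors shows that
its nonzero entries satisfy `μᵢ gᵢₖ ^ d = μₖ`. Only finitely many matrices qualify, so the
stabiliser of `q₀` in `GL(n, ℂ)`, which contains `O_ℂ(Q)`, is finite unless `d = 2`.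
-/

open MvPolynomial

/-- A family `Q 0, …, Q (r+1)` of `n`-algebraic forms (homogeneous polynomials) is
pre-realizable if `Q (r+1) = (Q 0)^s` for some `s ≥ max {n, ⌈deg(Q r)/deg(Q 0)⌉ + 1}`,
and `deg (Q (i+1)) − deg (Q i) > 1` for `i = 0, …, r`. -/
def PreRealizable (n r : ℕ) (Q : ℕ → MvPolynomial (Fin n) ℚ) : Prop :=
  (∀ i ≤ r + 1, (Q i).IsHomogeneous (Q i).totalDegree) ∧
  (∃ s : ℕ, max n ((Q r).totalDegree ⌈/⌉ (Q 0).totalDegree + 1) ≤ s ∧ Q (r + 1) = Q 0 ^ s) ∧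
  (∀ i ≤ r, (Q i).totalDegree + 1 < (Q (i + 1)).totalDegree)

namespace MvPolynomial

open Matrix

variable {R K : Type*} {n : ℕ}

section CommSemiring

variable [CommSemiring R]

noncomputable def diagonalForm (μ : Fin n → R) (d : ℕ) : MvPolynomial (Fin n) R :=
  ∑ i, C (μ i) * X i ^ d

noncomputable def linearForms (g : Matrix (Fin n) (Fin n) R) : Fin n → MvPolynomial (Fin n) R :=
  g.map C *ᵥ X

noncomputable def hessian (p : MvPolynomial (Fin n) R) :
    Matrix (Fin n) (Fin n) (MvPolynomial (Fin n) R) :=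
  of fun j k => pderiv j (pderiv k p)

theorem _root_.polyComp_eq_bind₁ (q : MvPolynomial (Fin n) R) (g : Matrix (Fin n) (Fin n) R) :
    polyComp q g = bind₁ (linearForms g) q :=
  rfl

theorem _root_.polyComp_diagonalForm (μ : Fin n → R) (d : ℕ) (g : Matrix (Fin n) (Fin n) R) :
    polyComp (diagonalForm μ d) g = ∑ i, C (μ i) * linearForms g i ^ d := by
  simp [polyComp_eq_bind₁, diagonalForm]

theorem map_diagonalForm {S : Type*} [CommSemiring S] (f : R →+* S) (μ : Fin n → R) (d : ℕ) :
    map f (diagonalForm μ d) = diagonalForm (f ∘ μ) d := by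
  simp [diagonalForm]

theorem linearForms_one : linearForms (1 : Matrix (Fin n) (Fin n) R) = X := by
  simp [linearForms, Matrix.map_one C C_0 C_1]

theorem eval_linearForms (g : Matrix (Fin n) (Fin n) R) (v : Fin n → R) (i : Fin n) :
    eval v (linearForms g i) = (g *ᵥ v) i := by
  simp [linearForms, mulVec, dotProduct]

theorem _root_.eval_polyComp_s7 (q : MvPolynomial (Fin n) R) (g : Matrix (Fin n) (Fin n) R)
    (v : Fin n → R) : eval v (polyComp q g) = eval (g *ᵥ v) q := by
  rw [polyComp_eq_bind₁, eval, eval₂Hom_bind₁]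
  congr
  funext i
  exact eval_linearForms g v i

theorem eval_diagonalForm (μ : Fin n → R) (d : ℕ) (v : Fin n → R) :
    eval v (diagonalForm μ d) = ∑ i, μ i * v i ^ d := by
  simp [diagonalForm]

theorem apply_eq_zero_of_X_dvd_linearForms {g : Matrix (Fin n) (Fin n) R} {i m : Fin n}
    (hdvd : X m ∣ linearForms g i) {k : Fin n} (hkm : k ≠ m) : g i k = 0 := by
  obtain ⟨p, hp⟩ := hdvd
  have h := congrArg (eval (Pi.single k 1)) hp
  rwa [eval_linearForms, mulVec_single_one, map_mul, eval_X, Pi.single_eq_of_ne hkm.symm,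
    zero_mul] at h

theorem sum_mul_pow_eq_of_polyComp_diagonalForm {μ : Fin n → R} {d : ℕ} (hd : d ≠ 0)
    {g : Matrix (Fin n) (Fin n) R} (hg : polyComp (diagonalForm μ d) g = diagonalForm μ d)
    (k : Fin n) : ∑ i, μ i * g i k ^ d = μ k := by
  have h := congrArg (eval (Pi.single k 1)) hg
  rw [eval_polyComp_s7, mulVec_single_one, eval_diagonalForm, eval_diagonalForm] at h
  simpa [Pi.single_apply, zero_pow hd] using h

theorem pderiv_linearForms (g : Matrix (Fin n) (Fin n) R) (i k : Fin n) :
    pderiv k (linearForms g i) = C (g i k) := by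
  simp [linearForms, mulVec, dotProduct, pderiv_X, Pi.single_apply]

end CommSemiring

section CommRing

variable [CommRing R]

theorem pderiv_pderiv_linearForms_pow (g : Matrix (Fin n) (Fin n) R) (d : ℕ) (i j k : Fin n) :
    pderiv j (pderiv k (linearForms g i ^ d)) =
      C (↑(d * (d - 1)) * g i j * g i k) * linearForms g i ^ (d - 2) := by
  have hd : d - 1 - 1 = d - 2 := by omega
  rw [Derivation.leibniz_pow, map_nsmul, smul_eq_mul, pderiv_mul, Derivation.leibniz_pow, hd]
  simp only [pderiv_linearForms, pderiv_C, mul_zero, add_zero, smul_eq_mul, nsmul_eq_mul, map_mul,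
    map_natCast, Nat.cast_mul]
  ring

theorem hessian_sum_C_mul_linearForms_pow (μ : Fin n → R) (d : ℕ)
    (g : Matrix (Fin n) (Fin n) R) :
    hessian (∑ i, C (μ i) * linearForms g i ^ d) =
      (g.map C)ᵀ * diagonal (fun i => C (↑(d * (d - 1)) * μ i) * linearForms g i ^ (d - 2)) *
        g.map C := by
  refine Matrix.ext fun j k => ?_
  rw [mul_apply]
  simp only [hessian, of_apply, map_sum, pderiv_C_mul, pderiv_pderiv_linearForms_pow,
    mul_diagonal, transpose_apply, map_apply]
  refine Finset.sum_congr rfl fun i _ => ?_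
  simp only [map_mul]
  ring

theorem hessian_diagonalForm (μ : Fin n → R) (d : ℕ) :
    hessian (diagonalForm μ d) =
      diagonal (fun i => C (↑(d * (d - 1)) * μ i) * X i ^ (d - 2)) := by
  have h := hessian_sum_C_mul_linearForms_pow μ d (1 : Matrix (Fin n) (Fin n) R)
  simp only [linearForms_one, Matrix.map_one C C_0 C_1, transpose_one, one_mul, mul_one] at h
  exact h

theorem det_map_C (g : Matrix (Fin n) (Fin n) R) :
    (g.map (C : R → MvPolynomial (Fin n) R)).det = C g.det :=
  (RingHom.map_det C g).symm

theorem apply_eq_zero_of_rows_supported_on {g : Matrix (Fin n) (Fin n) R} (hdet : g.det ≠ 0)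
    {ρ : Fin n → Fin n} (hρ : ∀ m k, k ≠ m → g (ρ m) k = 0) {i k : Fin n} (hi : i ≠ ρ k) :
    g i k = 0 := by
  have hρ_inj : ρ.Injective := by
    intro m m' hmm'
    by_contra hne
    refine hdet (det_eq_zero_of_row_eq_zero (ρ m) fun k => ?_)
    rcases eq_or_ne k m with rfl | hkm
    · exact hmm' ▸ hρ m' k hne
    · exact hρ m k hkm
  obtain ⟨m, rfl⟩ := Finite.injective_iff_surjective.mp hρ_inj i
  exact hρ m k fun hkm => hi (hkm ▸ rfl)

end CommRing

section Field

variable [Field K]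

theorem det_sq_mul_prod_linearForms_pow [CharZero K] {μ : Fin n → K} {d : ℕ} (hd : 2 ≤ d)
    (hμ : ∀ i, μ i ≠ 0) {g : Matrix (Fin n) (Fin n) K}
    (hg : polyComp (diagonalForm μ d) g = diagonalForm μ d) :
    C (g.det ^ 2) * ∏ i, linearForms g i ^ (d - 2) = ∏ i, X i ^ (d - 2) := by
  have h := congrArg (fun p => (hessian p).det) hg
  simp only [polyComp_diagonalForm, hessian_sum_C_mul_linearForms_pow, hessian_diagonalForm,
    det_mul, det_transpose, det_diagonal, det_map_C, Finset.prod_mul_distrib] at h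
  have hc : ∏ i, (C (↑(d * (d - 1)) * μ i) : MvPolynomial (Fin n) K) ≠ 0 := by
    refine Finset.prod_ne_zero_iff.mpr fun i _ => ?_
    rw [Ne, C_eq_zero]
    exact mul_ne_zero (Nat.cast_ne_zero.mpr (Nat.mul_pos (by omega) (by omega)).ne') (hμ i)
  refine mul_left_cancel₀ hc ?_
  rw [map_pow]
  linear_combination h

theorem exists_row_supported_on {g : Matrix (Fin n) (Fin n) K} (hdet : g.det ≠ 0) {d : ℕ}
    (hd : 3 ≤ d) (h : C (g.det ^ 2) * ∏ i, linearForms g i ^ (d - 2) = ∏ i, X i ^ (d - 2))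
    (m : Fin n) : ∃ i, ∀ k, k ≠ m → g i k = 0 := by
  have hX : X m ∣ C (g.det ^ 2) * ∏ i, linearForms g i ^ (d - 2) :=
    h ▸ (dvd_pow_self _ (by omega)).trans (Finset.dvd_prod_of_mem _ (Finset.mem_univ m))
  rw [(isUnit_iff_ne_zero.mpr (pow_ne_zero 2 hdet)).map C |>.dvd_mul_left,
    X_prime.dvd_finsetProd_iff] at hX
  obtain ⟨i, -, hi⟩ := hX
  exact ⟨i, fun k hkm => apply_eq_zero_of_X_dvd_linearForms (X_prime.dvd_of_dvd_pow hi) hkm⟩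

theorem apply_eq_zero_or_mul_pow_eq_of_polyComp_diagonalForm [CharZero K] {μ : Fin n → K}
    {d : ℕ} (hd : 3 ≤ d) (hμ : ∀ i, μ i ≠ 0) {g : Matrix (Fin n) (Fin n) K} (hdet : g.det ≠ 0)
    (hg : polyComp (diagonalForm μ d) g = diagonalForm μ d) (i k : Fin n) :
    g i k = 0 ∨ μ i * g i k ^ d = μ k := by
  choose ρ hρ using
    exists_row_supported_on hdet hd (det_sq_mul_prod_linearForms_pow (by omega) hμ hg)
  have hcol : ∀ i, i ≠ ρ k → g i k = 0 := fun _ => apply_eq_zero_of_rows_supported_on hdet hρ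
  by_cases hi : i = ρ k
  · subst hi
    right
    rw [← sum_mul_pow_eq_of_polyComp_diagonalForm (by omega) hg k,
      Finset.sum_eq_single (ρ k) (fun i _ hi => by rw [hcol i hi, zero_pow (by omega), mul_zero])
        (by simp)]
  · exact .inl (hcol i hi)

theorem finite_setOf_mul_pow_eq {μ : Fin n → K} (hμ : ∀ i, μ i ≠ 0) {d : ℕ} (hd : 0 < d) :
    {z : K | ∃ a b, μ a * z ^ d = μ b}.Finite := by
  classical
  refine (Set.finite_iUnion fun a => Set.finite_iUnion fun b =>
    (Polynomial.nthRoots d (μ b / μ a)).toFinset.finite_toSet).subset ?_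
  rintro z ⟨a, b, hab⟩
  simp only [Set.mem_iUnion, Finset.mem_coe, Multiset.mem_toFinset, Polynomial.mem_nthRoots hd]
  exact ⟨a, b, by rw [← hab, mul_div_cancel_left₀ _ (hμ a)]⟩

theorem finite_setOf_polyComp_diagonalForm_eq [CharZero K] {μ : Fin n → K} (hμ : ∀ i, μ i ≠ 0)
    {d : ℕ} (hd : 3 ≤ d) :
    {f : GL (Fin n) K | polyComp (diagonalForm μ d) f = diagonalForm μ d}.Finite := by
  set S := insert 0 {z : K | ∃ a b, μ a * z ^ d = μ b}
  have hmat : (Set.univ.pi fun _ => Set.univ.pi fun _ => S :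
      Set (Matrix (Fin n) (Fin n) K)).Finite :=
    Set.Finite.pi fun _ => Set.Finite.pi fun _ => (finite_setOf_mul_pow_eq hμ (by omega)).insert 0
  refine (hmat.preimage (Units.val_injective (α := Matrix (Fin n) (Fin n) K)).injOn).subset
    fun f hf i _ k _ => ?_
  exact (apply_eq_zero_or_mul_pow_eq_of_polyComp_diagonalForm hd hμ
    ((isUnit_iff_isUnit_det _).mp f.isUnit).ne_zero hf i k).imp id fun h => ⟨i, k, h⟩

end Field

end MvPolynomial

theorem stmt_7_general {n r : ℕ} (Q : ℕ → MvPolynomial (Fin n) ℚ)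
    (d : ℕ) (hd : 1 < d) (lam : Fin n → ℚ) (hlam : ∀ i, lam i ≠ 0)
    (hQ0 : Q 0 = ∑ i, C (lam i) * X i ^ d)
    (hinf : {f : GL (Fin n) ℂ |
        ∀ i ≤ r + 1,
          polyComp (map (algebraMap ℚ ℂ) (Q i)) (f : Matrix (Fin n) (Fin n) ℂ) =
            map (algebraMap ℚ ℂ) (Q i)}.Infinite) :
    d = 2 := by
  by_contra hd2
  have hq₀ : map (algebraMap ℚ ℂ) (Q 0) = diagonalForm (algebraMap ℚ ℂ ∘ lam) d := by
    rw [hQ0, ← map_diagonalForm]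
    rfl
  have hμ : ∀ i, (algebraMap ℚ ℂ ∘ lam) i ≠ 0 := fun i => (map_ne_zero _).mpr (hlam i)
  refine hinf ((finite_setOf_polyComp_diagonalForm_eq hμ (by omega : 3 ≤ d)).subset
    fun f hf => ?_)
  exact hq₀ ▸ hf 0 (Nat.zero_le _)

/-- Let `Q = {q₀, …, q_{r+1}} ⊂ ℚ[v₁, …, v_n]` be a realizable family of
`n`-algebraic forms (so `Q` is pre-realizable and `q₀ = λ₁v₁^d + … + λ_n v_n^d` with all
`λ_i ≠ 0`) with `d = deg(q₀) > 1`. If the complex orthogonal group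
`O_ℂ(Q) = {f ∈ GL(n, ℂ) : q_i ∘ f = q_i for all i}` is infinite, then `d = 2`. -/
theorem stmt_7 {n r : ℕ} (Q : ℕ → MvPolynomial (Fin n) ℚ)
    (hpre : PreRealizable n r Q)
    (d : ℕ) (hd : 1 < d) (lam : Fin n → ℚ) (hlam : ∀ i, lam i ≠ 0)
    (hQ0 : Q 0 = ∑ i, C (lam i) * X i ^ d)
    (hinf : {f : GL (Fin n) ℂ |
        ∀ i ≤ r + 1,
          polyComp (map (algebraMap ℚ ℂ) (Q i)) (f : Matrix (Fin n) (Fin n) ℂ) =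
            map (algebraMap ℚ ℂ) (Q i)}.Infinite) :
    d = 2 :=
  stmt_7_general Q d hd lam hlam hQ0 hinf
end

section
/- Let P = ℚ[x₁, x₂, v₁, …, v_n] be graded by assigning weight 8 to x₁, weight 10 to x₂, and weight 40 to each v_j, and let d > 1 and k > 1 be integers. Suppose A₁, A₂, A₃ ∈ P are weighted homogeneous of weighted degrees 80k + 40d − 74, 80k + 40d − 76 and 80k + 40d − 78 respectively, and that x₁³x₂·A₁ + x₁²x₂²·A₂ + x₁x₂³·A₃ = 0. Then there exist B₂, B₃ ∈ P such that A₁ = −x₁²x₂³·(B₂ + B₃), A₂ = x₁³x₂²·B₂, and A₃ = x₁⁴x₂·B₃. -/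
/-!
The weighted degrees of `A₂` and `A₃` are `≡ 4` and `≡ 2 (mod 40)`. Since
`8a + 10b + 40c ≡ 2b (mod 8)` and `≡ 3a (mod 5)`, every monomial `x₁ᵃ x₂ᵇ v^c` of weight
`≡ 4 (mod 40)` has `a ≡ 3 (mod 5)` and `b ≡ 2 (mod 4)`, hence is divisible by `x₁³x₂²`; one of
weight `≡ 2 (mod 40)` has `a ≡ 4 (mod 5)` and `b ≡ 1 (mod 4)`, hence is divisible by `x₁⁴x₂`.
This gives `B₂` and `B₃`, and cancelling the non-zero-divisor `x₁³x₂` in the relation gives `A₁`.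
-/

open MvPolynomial

/-- The weight function on the variables of `P = ℚ[x₁, x₂, v₁, …, v_n]`
(`x₁, x₂` are `Sum.inl 0, Sum.inl 1` and `v_j` is `Sum.inr j`):
`w(x₁) = 8`, `w(x₂) = 10`, `w(v_j) = 40`. -/
def sullivanWeight (n : ℕ) : Fin 2 ⊕ Fin n → ℕ :=
  Sum.elim ![8, 10] fun _ => 40

namespace MvPolynomial

variable {R σ : Type*} [CommSemiring R]

theorem monomial_one_dvd_of_forall_le {s : σ →₀ ℕ} {p : MvPolynomial σ R}
    (h : ∀ m ∈ p.support, s ≤ m) : monomial s 1 ∣ p := by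
  rw [p.as_sum]
  refine Finset.dvd_sum fun m hm => ?_
  exact monomial_dvd_monomial.mpr ⟨Or.inr (h m hm), one_dvd _⟩

theorem IsWeightedHomogeneous.monomial_one_dvd {w : σ → ℕ} {D : ℕ} {s : σ →₀ ℕ}
    {p : MvPolynomial σ R} (hp : p.IsWeightedHomogeneous w D)
    (h : ∀ m : σ →₀ ℕ, Finsupp.weight w m = D → s ≤ m) : monomial s 1 ∣ p :=
  monomial_one_dvd_of_forall_le fun m hm => h m (hp (mem_support_iff.mp hm))

theorem X_pow_mul_X_pow_eq_monomial (i j : σ) (a b : ℕ) :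
    (X i ^ a * X j ^ b : MvPolynomial σ R) =
      monomial (Finsupp.single i a + Finsupp.single j b) 1 := by
  rw [X_pow_eq_monomial, X_pow_eq_monomial, monomial_mul, one_mul]

end MvPolynomial

section sullivanWeight

variable {R : Type*} [CommSemiring R] {n : ℕ}

theorem weight_sullivanWeight (m : Fin 2 ⊕ Fin n →₀ ℕ) :
    Finsupp.weight (sullivanWeight n) m =
      8 * m (Sum.inl 0) + 10 * m (Sum.inl 1) + 40 * ∑ j, m (Sum.inr j) := by
  rw [Finsupp.weight_apply, Finsupp.sum_fintype _ _ (by simp), Fintype.sum_sum_type]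
  simp [sullivanWeight, Fin.sum_univ_two, Finset.mul_sum, mul_comm]

theorem X_pow_mul_X_pow_dvd_of_isWeightedHomogeneous {D a b : ℕ}
    {p : MvPolynomial (Fin 2 ⊕ Fin n) R} (hp : p.IsWeightedHomogeneous (sullivanWeight n) D)
    (h : ∀ i j c : ℕ, 8 * i + 10 * j + 40 * c = D → a ≤ i ∧ b ≤ j) :
    X (Sum.inl 0) ^ a * X (Sum.inl 1) ^ b ∣ p := by
  rw [X_pow_mul_X_pow_eq_monomial]
  refine hp.monomial_one_dvd fun m hm v => ?_
  obtain ⟨ha, hb⟩ := h _ _ _ ((weight_sullivanWeight m).symm.trans hm)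
  rcases v with i | j
  · fin_cases i <;> simpa [Finsupp.single_apply]
  · simp

theorem X₁_pow_three_mul_X₂_sq_dvd {D : ℕ} (hD : D % 40 = 4)
    {p : MvPolynomial (Fin 2 ⊕ Fin n) R} (hp : p.IsWeightedHomogeneous (sullivanWeight n) D) :
    X (Sum.inl 0) ^ 3 * X (Sum.inl 1) ^ 2 ∣ p :=
  X_pow_mul_X_pow_dvd_of_isWeightedHomogeneous hp fun _ _ _ _ => by omega

theorem X₁_pow_four_mul_X₂_dvd {D : ℕ} (hD : D % 40 = 2)
    {p : MvPolynomial (Fin 2 ⊕ Fin n) R} (hp : p.IsWeightedHomogeneous (sullivanWeight n) D) :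
    X (Sum.inl 0) ^ 4 * X (Sum.inl 1) ∣ p := by
  simpa using X_pow_mul_X_pow_dvd_of_isWeightedHomogeneous (b := 1) hp
    fun _ _ _ _ => by omega

end sullivanWeight

theorem stmt_15_general {n : ℕ} (k d : ℕ) (hk : 1 < k)
    (A₁ A₂ A₃ : MvPolynomial (Fin 2 ⊕ Fin n) ℚ)
    (hA₂ : A₂.IsWeightedHomogeneous (sullivanWeight n) (80 * k + 40 * d - 76))
    (hA₃ : A₃.IsWeightedHomogeneous (sullivanWeight n) (80 * k + 40 * d - 78))
    (hrel : X (Sum.inl 0) ^ 3 * X (Sum.inl 1) * A₁ +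
        X (Sum.inl 0) ^ 2 * X (Sum.inl 1) ^ 2 * A₂ +
        X (Sum.inl 0) * X (Sum.inl 1) ^ 3 * A₃ = 0) :
    ∃ B₂ B₃ : MvPolynomial (Fin 2 ⊕ Fin n) ℚ,
      A₁ = -(X (Sum.inl 0) ^ 2 * X (Sum.inl 1) ^ 3 * (B₂ + B₃)) ∧
      A₂ = X (Sum.inl 0) ^ 3 * X (Sum.inl 1) ^ 2 * B₂ ∧
      A₃ = X (Sum.inl 0) ^ 4 * X (Sum.inl 1) * B₃ := by
  obtain ⟨B₂, rfl⟩ := X₁_pow_three_mul_X₂_sq_dvd (by omega) hA₂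
  obtain ⟨B₃, rfl⟩ := X₁_pow_four_mul_X₂_dvd (by omega) hA₃
  refine ⟨B₂, B₃, ?_, rfl, rfl⟩
  have hx : (X (Sum.inl 0) ^ 3 * X (Sum.inl 1) : MvPolynomial (Fin 2 ⊕ Fin n) ℚ) ≠ 0 :=
    mul_ne_zero (pow_ne_zero _ (X_ne_zero _)) (X_ne_zero _)
  refine mul_left_cancel₀ hx ?_
  linear_combination hrel

/-- Let `P = ℚ[x₁, x₂, v₁, …, v_n]` be graded by `w(x₁) = 8`, `w(x₂) = 10`,
`w(v_j) = 40`, and let `d > 1`, `k > 1`. Suppose `A₁, A₂, A₃ ∈ P` are weighted homogeneous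
of weighted degrees `80k + 40d − 74`, `80k + 40d − 76` and `80k + 40d − 78` respectively,
and `x₁³x₂·A₁ + x₁²x₂²·A₂ + x₁x₂³·A₃ = 0`. Then there exist `B₂, B₃ ∈ P` with
`A₁ = −x₁²x₂³·(B₂ + B₃)`, `A₂ = x₁³x₂²·B₂` and `A₃ = x₁⁴x₂·B₃`. -/
theorem stmt_15 {n : ℕ} (k d : ℕ) (hk : 1 < k) (hd : 1 < d)
    (A₁ A₂ A₃ : MvPolynomial (Fin 2 ⊕ Fin n) ℚ)
    (hA₁ : A₁.IsWeightedHomogeneous (sullivanWeight n) (80 * k + 40 * d - 74))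
    (hA₂ : A₂.IsWeightedHomogeneous (sullivanWeight n) (80 * k + 40 * d - 76))
    (hA₃ : A₃.IsWeightedHomogeneous (sullivanWeight n) (80 * k + 40 * d - 78))
    (hrel : X (Sum.inl 0) ^ 3 * X (Sum.inl 1) * A₁ +
        X (Sum.inl 0) ^ 2 * X (Sum.inl 1) ^ 2 * A₂ +
        X (Sum.inl 0) * X (Sum.inl 1) ^ 3 * A₃ = 0) :
    ∃ B₂ B₃ : MvPolynomial (Fin 2 ⊕ Fin n) ℚ,
      A₁ = -(X (Sum.inl 0) ^ 2 * X (Sum.inl 1) ^ 3 * (B₂ + B₃)) ∧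
      A₂ = X (Sum.inl 0) ^ 3 * X (Sum.inl 1) ^ 2 * B₂ ∧
      A₃ = X (Sum.inl 0) ^ 4 * X (Sum.inl 1) * B₃ :=
  stmt_15_general k d hk A₁ A₂ A₃ hA₂ hA₃ hrel
end
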